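/- The factor (−(a+b)c + d²) divides det(M_R^(2)) with multiplicity at least 2, as a polynomial identity in ℤ[a,b,c,d]: det(M_R^(2)) = −d^4·(c(2(a+b)+c) − d²)·(d² − (a+b)c)². -/

import Mathlib

/-!
Listing the interior vertices `x₀, …, x₃` before the six leaves, `M_R^(2)` has the block form
`[[A, B], [C, d • 1]]`. Multiplying on the right by `[[d • 1, 0], [-C, 1]]` makes it block
upper triangular with diagonal blocks `d • A - B * C` and `d • 1`, so over any commutative ring
`d⁴ · det M = d⁶ · det (d • A - B * C)`. The Schur complement `d • A - B * C` is a 4 × 4 arrow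
matrix whose determinant is expanded directly, and `d⁴` cancels in the domain `ℤ[a, b, c, d]`.
-/

/-- The rule matrix `M_R^(2)` of the level-2 null-boundary cellular automaton on the
Cayley tree of order 2, with rows/columns indexed by the vertices
`x₀, x₁, x₂, x₃, x₁₁, x₁₂, x₂₁, x₂₂, x₃₁, x₃₂` (Example 1 of the paper). -/
def M2 (R : Type*) [CommRing R] (a b c d : R) : Matrix (Fin 10) (Fin 10) R :=
  !![d, a, b, c, 0, 0, 0, 0, 0, 0;
     c, d, 0, 0, a, b, 0, 0, 0, 0;
     c, 0, d, 0, 0, 0, a, b, 0, 0;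
     c, 0, 0, d, 0, 0, 0, 0, a, b;
     0, c, 0, 0, d, 0, 0, 0, 0, 0;
     0, c, 0, 0, 0, d, 0, 0, 0, 0;
     0, 0, c, 0, 0, 0, d, 0, 0, 0;
     0, 0, c, 0, 0, 0, 0, d, 0, 0;
     0, 0, 0, c, 0, 0, 0, 0, d, 0;
     0, 0, 0, c, 0, 0, 0, 0, 0, d]

namespace Matrix

variable {R m n : Type*} [CommRing R] [Fintype m] [Fintype n] [DecidableEq m] [DecidableEq n]

theorem fromBlocks_smul_one_mul_fromBlocks (A : Matrix m m R) (B : Matrix m n R)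
    (C : Matrix n m R) (d : R) :
    fromBlocks A B C (d • 1) * fromBlocks (d • 1) 0 (-C) 1 =
      fromBlocks (d • A - B * C) B 0 (d • 1) := by
  simp [fromBlocks_multiply, sub_eq_add_neg]

theorem pow_card_mul_det_fromBlocks_smul_one (A : Matrix m m R) (B : Matrix m n R)
    (C : Matrix n m R) (d : R) :
    d ^ Fintype.card m * (fromBlocks A B C (d • 1)).det =
      d ^ Fintype.card n * (d • A - B * C).det := by
  have := congrArg det (fromBlocks_smul_one_mul_fromBlocks A B C d)
  rw [det_mul, det_fromBlocks_zero₁₂, det_fromBlocks_zero₂₁, det_one, det_smul, det_smul,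
    det_one, det_one] at this
  linear_combination this

end Matrix

namespace M2

variable {R : Type*} [CommRing R]

def interior (a b c d : R) : Matrix (Fin 4) (Fin 4) R :=
  !![d, a, b, c; c, d, 0, 0; c, 0, d, 0; c, 0, 0, d]

def toLeaves (a b : R) : Matrix (Fin 4) (Fin 6) R :=
  !![0, 0, 0, 0, 0, 0; a, b, 0, 0, 0, 0; 0, 0, a, b, 0, 0; 0, 0, 0, 0, a, b]

def fromLeaves (c : R) : Matrix (Fin 6) (Fin 4) R :=
  !![0, c, 0, 0; 0, c, 0, 0; 0, 0, c, 0; 0, 0, c, 0; 0, 0, 0, c; 0, 0, 0, c]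

theorem submatrix_finSumFinEquiv (a b c d : R) :
    (M2 R a b c d).submatrix finSumFinEquiv finSumFinEquiv =
      Matrix.fromBlocks (interior a b c d) (toLeaves a b) (fromLeaves c) (d • 1) := by
  rw [Matrix.smul_one_eq_diagonal]
  ext (i | i) (j | j) <;> fin_cases i <;> fin_cases j <;> rfl

theorem smul_interior_sub_toLeaves_mul_fromLeaves (a b c d : R) :
    d • interior a b c d - toLeaves a b * fromLeaves c =
      !![d * d, d * a, d * b, d * c;
         d * c, d * d - (a + b) * c, 0, 0;
         d * c, 0, d * d - (a + b) * c, 0;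
         d * c, 0, 0, d * d - (a + b) * c] := by
  ext i j
  fin_cases i <;> fin_cases j <;>
    simp [interior, toLeaves, fromLeaves] <;> ring

theorem det_schurComplement (a b c d : R) :
    Matrix.det !![d * d, d * a, d * b, d * c;
         d * c, d * d - (a + b) * c, 0, 0;
         d * c, 0, d * d - (a + b) * c, 0;
         d * c, 0, 0, d * d - (a + b) * c] =
      -d ^ 2 * (c * (2 * (a + b) + c) - d ^ 2) * (d ^ 2 - (a + b) * c) ^ 2 := by
  simp [Matrix.det_succ_row_zero, Fin.sum_univ_succ, Fin.succAbove]
  ring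

theorem pow_four_mul_det (a b c d : R) :
    d ^ 4 * (M2 R a b c d).det =
      d ^ 4 * (-d ^ 4 * (c * (2 * (a + b) + c) - d ^ 2) * (d ^ 2 - (a + b) * c) ^ 2) := by
  have h := Matrix.pow_card_mul_det_fromBlocks_smul_one (interior a b c d) (toLeaves a b)
    (fromLeaves c) d
  rw [smul_interior_sub_toLeaves_mul_fromLeaves, det_schurComplement, ← submatrix_finSumFinEquiv,
    Matrix.det_submatrix_equiv_self, Fintype.card_fin, Fintype.card_fin] at h
  linear_combination h

end M2

open MvPolynomial

/-- As a polynomial identity in `ℤ[a,b,c,d]`: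
`det(M_R^(2)) = −d⁴·(c(2(a+b)+c) − d²)·(d² − (a+b)c)²`; in particular the factor
`−(a+b)c + d²` divides `det(M_R^(2))` with multiplicity at least 2. -/
theorem det_M2_polynomial_identity :
    (M2 (MvPolynomial (Fin 4) ℤ) (X 0) (X 1) (X 2) (X 3)).det =
      -(X 3 : MvPolynomial (Fin 4) ℤ) ^ 4 *
        (X 2 * (2 * (X 0 + X 1) + X 2) - X 3 ^ 2) *
        (X 3 ^ 2 - (X 0 + X 1) * X 2) ^ 2 := by
  exact mul_left_cancel₀ (pow_ne_zero 4 (X_ne_zero 3)) (M2.pow_four_mul_det _ _ _ _)
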